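/- Let G be a linearly ordered abelian group and let S₁, S₂ both be final segments of G. Then 𝒢(S₁ + S₂) = 𝒢(S₁) + 𝒢(S₂), and this equals the larger of the two subgroups 𝒢(S₁), 𝒢(S₂) (which are comparable under inclusion). -/

import Mathlib

/-!
The invariance group of `M` is its stabilizer under translation, hence a subgroup, and for an
upper set `S` and `γ ≥ 0` it contains `γ` exactly when `S - γ ⊆ S`. If `γ ≥ 0` stabilizes
neither `S₁` nor `S₂`, pick `sᵢ ∈ Sᵢ` with `sᵢ - γ ∉ Sᵢ`; every element of `Sᵢ` then exceeds
`sᵢ - γ`, so `s₁ + s₂ - 2γ ∉ S₁ + S₂` and `2γ`, hence `γ`, does not stabilize `S₁ + S₂`. So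
`𝒢(S₁ + S₂) = 𝒢(S₁) ∪ 𝒢(S₂)`; a union of two subgroups is a subgroup only when they are
comparable, and then it is also their sum.
-/

open Pointwise

/-- A final segment of a linearly ordered abelian group: a nonempty proper
upward-closed subset. -/
def IsFinalSegment {G : Type*} [AddCommGroup G] [LinearOrder G] [IsOrderedAddMonoid G] (S : Set G) : Prop :=
  S.Nonempty ∧ S ≠ Set.univ ∧ ∀ a ∈ S, ∀ b, a ≤ b → b ∈ S

/-- The invariance group of a subset `M`: `𝒢(M) = {γ | M + γ = M}`. -/
def invGrp {G : Type*} [AddCommGroup G] [LinearOrder G] [IsOrderedAddMonoid G] (M : Set G) : Set G :=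
  {γ | (fun m => m + γ) '' M = M}

open AddAction

theorem AddSubgroup.le_or_le_of_coe_union_eq {G : Type*} [AddGroup G] {H K L : AddSubgroup G}
    (h : (H ∪ K : Set G) = L) : H ≤ K ∨ K ≤ H := by
  by_contra! ⟨hHK, hKH⟩
  obtain ⟨a, haH, haK⟩ := SetLike.not_le_iff_exists.1 hHK
  obtain ⟨b, hbK, hbH⟩ := SetLike.not_le_iff_exists.1 hKH
  have hab : a + b ∈ (H ∪ K : Set G) :=
    h ▸ L.add_mem (h ▸ Or.inl haH : a ∈ (L : Set G)) (h ▸ Or.inr hbK : b ∈ (L : Set G))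
  rcases hab with hab | hab
  · exact hbH (by simpa using H.add_mem (H.neg_mem haH) hab)
  · exact haK (by simpa using K.add_mem hab (K.neg_mem hbK))

section

variable {G : Type*} [AddCommGroup G]

theorem stabilizer_le_stabilizer_add_left (S₁ S₂ : Set G) :
    stabilizer G S₁ ≤ stabilizer G (S₁ + S₂) := by
  intro γ hγ
  rw [mem_stabilizer_iff] at hγ ⊢
  rw [← vadd_add_assoc, hγ]

theorem stabilizer_le_stabilizer_add_right (S₁ S₂ : Set G) :
    stabilizer G S₂ ≤ stabilizer G (S₁ + S₂) :=
  add_comm S₂ S₁ ▸ stabilizer_le_stabilizer_add_left S₂ S₁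

end

section

variable {G : Type*} [AddCommGroup G] [Preorder G] [IsOrderedAddMonoid G]

theorem IsUpperSet.mem_stabilizer_iff {S : Set G} (hS : IsUpperSet S) {γ : G} (hγ : 0 ≤ γ) :
    γ ∈ stabilizer G S ↔ ∀ s ∈ S, s - γ ∈ S := by
  rw [AddAction.mem_stabilizer_iff, Set.Subset.antisymm_iff, and_iff_right (hS.vadd_subset hγ),
    Set.subset_vadd_set_iff, Set.vadd_set_subset_iff]
  simp only [vadd_eq_add, neg_add_eq_sub]

end

section

variable {G : Type*} [AddCommGroup G] [LinearOrder G] [IsOrderedAddMonoid G]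
  {S₁ S₂ : Set G}

theorem IsUpperSet.mem_stabilizer_or_of_mem_stabilizer_add (h₁ : IsUpperSet S₁)
    (h₂ : IsUpperSet S₂) {γ : G} (hγ : 0 ≤ γ) (h : γ ∈ stabilizer G (S₁ + S₂)) :
    γ ∈ stabilizer G S₁ ∨ γ ∈ stabilizer G S₂ := by
  simp only [h₁.mem_stabilizer_iff hγ, h₂.mem_stabilizer_iff hγ]
  by_contra! ⟨⟨s₁, hs₁, hs₁γ⟩, ⟨s₂, hs₂, hs₂γ⟩⟩
  obtain ⟨t₁, ht₁, t₂, ht₂, ht⟩ : s₁ + s₂ - (γ + γ) ∈ S₁ + S₂ :=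
    (h₂.add_left.mem_stabilizer_iff (add_nonneg hγ hγ)).1 (add_mem h h) _ (Set.add_mem_add hs₁ hs₂)
  have hlt₁ : s₁ - γ < t₁ := lt_of_not_ge fun hle => hs₁γ (h₁ hle ht₁)
  have hlt₂ : s₂ - γ < t₂ := lt_of_not_ge fun hle => hs₂γ (h₂ hle ht₂)
  have hlt : s₁ - γ + (s₂ - γ) < s₁ + s₂ - (γ + γ) := ht ▸ add_lt_add hlt₁ hlt₂
  exact hlt.ne (by abel)

theorem IsUpperSet.coe_stabilizer_add (h₁ : IsUpperSet S₁) (h₂ : IsUpperSet S₂) :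
    (stabilizer G (S₁ + S₂) : Set G) = (stabilizer G S₁ : Set G) ∪ stabilizer G S₂ := by
  refine Set.Subset.antisymm (fun γ hγ => ?_) (Set.union_subset
    (stabilizer_le_stabilizer_add_left S₁ S₂) (stabilizer_le_stabilizer_add_right S₁ S₂))
  rcases le_total 0 γ with hγ₀ | hγ₀
  · exact h₁.mem_stabilizer_or_of_mem_stabilizer_add h₂ hγ₀ hγ
  · simpa only [neg_mem_iff, Set.mem_union, SetLike.mem_coe] using
      h₁.mem_stabilizer_or_of_mem_stabilizer_add h₂ (neg_nonneg.2 hγ₀) (neg_mem hγ)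

theorem invGrp_eq_stabilizer (M : Set G) : invGrp M = stabilizer G M := by
  ext γ
  rw [SetLike.mem_coe, mem_stabilizer_iff, ← Set.image_vadd]
  simp only [vadd_eq_add, add_comm γ]
  rfl

theorem IsFinalSegment.isUpperSet {S : Set G} (hS : IsFinalSegment S) : IsUpperSet S :=
  fun a b hab ha => hS.2.2 a ha b hab

end

/-- For final segments `S₁, S₂`, `𝒢(S₁ + S₂) = 𝒢(S₁) + 𝒢(S₂) = 𝒢(S₁) ∪ 𝒢(S₂)`
(the larger of the two comparable invariance groups). -/
theorem invGrp_add_finalSegments {G : Type*} [AddCommGroup G] [LinearOrder G] [IsOrderedAddMonoid G]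
    (S₁ S₂ : Set G) (h₁ : IsFinalSegment S₁) (h₂ : IsFinalSegment S₂) :
    invGrp (S₁ + S₂) = invGrp S₁ + invGrp S₂ ∧
    invGrp (S₁ + S₂) = invGrp S₁ ∪ invGrp S₂ ∧
    (invGrp S₁ ⊆ invGrp S₂ ∨ invGrp S₂ ⊆ invGrp S₁) := by
  simp only [invGrp_eq_stabilizer]
  have hunion := h₁.isUpperSet.coe_stabilizer_add h₂.isUpperSet
  have hle := AddSubgroup.le_or_le_of_coe_union_eq hunion.symm
  refine ⟨?_, hunion, hle⟩
  rw [← AddSubgroup.add_normal, hunion]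
  rcases hle with h | h
  · rw [sup_eq_right.2 h, Set.union_eq_right.2 h]
  · rw [sup_eq_left.2 h, Set.union_eq_left.2 h]
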